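/- Let M be a nonzero closed subspace of H with T_{α,β} M ⊆ M, and set M₁ := {x ∈ M : ⟨x, e_0⟩ = 0} (a closed subspace of M). Then M₁ ≠ {0}, M₁ is invariant under T_{α,β}, and either M = M₁ or the orthogonal complement M ⊖ M₁ is one-dimensional. (In the Hardy-space picture, M₁ = z²θH²(𝔻) for an inner function θ unique up to a unimodular scalar, so either M = z²θH²(𝔻) or dim(M ⊖ z²θH²(𝔻)) = 1.) -/

import Mathlib

open scoped ComplexConjugate

noncomputable section

/-- The Hilbert space `H = ℓ²(ℕ, ℂ)`. -/
abbrev H : Type := lp (fun _ : ℕ => ℂ) 2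

/-- The standard orthonormal basis vectors of `ℓ²(ℕ, ℂ)`. -/
noncomputable def e (n : ℕ) : H := lp.single 2 n (1 : ℂ)

/-!
Since `(T x) 0 = α * conj β * x 0`, the subspace `M₁ = M ∩ {x | x 0 = 0}` is `T`-invariant, and it
has codimension at most one in `M`, so `M ⊖ M₁` is one-dimensional unless `M = M₁`. And `M₁ ≠ 0`:
for `v ∈ M` with `v 0 ≠ 0`, the vector `T v - α * conj β • v` lies in `M₁`, and it is not zero
because `α * conj β`, of modulus at most `1 / 2`, is not an eigenvalue of `T`.
-/

theorem finrank_inf_orthogonal_inf_ker_eq_one {𝕜 E : Type*} [RCLike 𝕜] [NormedAddCommGroup E]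
    [InnerProductSpace 𝕜 E] [CompleteSpace E] {K : Submodule 𝕜 E} (hK : IsClosed (K : Set E))
    {f : E →L[𝕜] 𝕜} (hKf : ¬ K ≤ f.ker) :
    Module.finrank 𝕜 ↥(K ⊓ (K ⊓ f.ker)ᗮ) = 1 := by
  set K₁ := K ⊓ f.ker
  have : CompleteSpace K₁ := (hK.inter f.isClosed_ker).completeSpace_coe
  set g : ↥(K ⊓ K₁ᗮ) →ₗ[𝕜] 𝕜 := (f : E →ₗ[𝕜] 𝕜).comp (K ⊓ K₁ᗮ).subtype
  have hg_inj : Function.Injective g := by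
    refine (injective_iff_map_eq_zero g).2 fun x hx => ?_
    have hxK₁ : (x : E) ∈ K₁ := ⟨x.2.1, hx⟩
    exact Subtype.ext (inner_self_eq_zero.mp (x.2.2 _ hxK₁))
  obtain ⟨v, hvK, hvf⟩ := SetLike.not_le_iff_exists.mp hKf
  set u := v - K₁.starProjection v
  have hu : u ∈ K ⊓ K₁ᗮ :=
    ⟨K.sub_mem hvK (K₁.starProjection_apply_mem v).1, K₁.sub_starProjection_mem_orthogonal v⟩
  have hfp : f (K₁.starProjection v) = 0 := (K₁.starProjection_apply_mem v).2
  have hgu : g ⟨u, hu⟩ ≠ 0 := by simpa [g, u, hfp] using hvf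
  have hg_surj : Function.Surjective g :=
    LinearMap.surjective_iff_ne_zero.mpr fun h => hgu (by rw [h]; rfl)
  rw [(LinearEquiv.ofBijective g ⟨hg_inj, hg_surj⟩).finrank_eq, Module.finrank_self]

@[simp] lemma e_apply (n m : ℕ) : e n m = if m = n then 1 else 0 := by
  simp [e, lp.single_apply, Pi.single_apply]

lemma inner_e_left (m : ℕ) (x : H) : inner ℂ (e m) x = x m := by
  simp [e, lp.inner_single_left, RCLike.inner_apply]

lemma mem_ker_innerSL_e_iff (m : ℕ) (x : H) : x ∈ (innerSL ℂ (e m)).ker ↔ x m = 0 := by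
  rw [LinearMap.mem_ker, ContinuousLinearMap.coe_coe, innerSL_apply_apply, inner_e_left]

lemma ContinuousLinearMap.apply_eq_mul_of_apply_e {T : H →L[ℂ] H} {m k : ℕ} {c : ℂ}
    (h : ∀ n, T (e n) m = if n = k then c else 0) (x : H) : T x m = c * x k := by
  have hx : HasSum (fun n => x n • e n) x := by
    simpa [e, ← lp.single_smul] using lp.hasSum_single ENNReal.ofNat_ne_top x
  have hTx : HasSum (fun n => x n * T (e n) m) (T x m) := by
    simpa [inner_e_left] using (hx.mapL T).mapL (innerSL ℂ (e m))
  refine hTx.unique ((hasSum_ite_eq k (c * x k)).congr_fun fun n => ?_)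
  by_cases hn : n = k <;> simp [h, hn, mul_comm]

/-- The operator `T_{α,β}` satisfies `IsPerturbedShift (α * conj β) β`. -/
structure IsPerturbedShift (c β : ℂ) (T : H →L[ℂ] H) : Prop where
  apply_e_zero : T (e 0) = c • e 0 + β • e 1
  apply_e_of_one_le : ∀ n : ℕ, 1 ≤ n → T (e n) = e (n + 1)

namespace IsPerturbedShift

variable {c β : ℂ} {T : H →L[ℂ] H}

lemma apply_e_succ (hT : IsPerturbedShift c β T) (n : ℕ) : T (e (n + 1)) = e (n + 2) :=
  hT.apply_e_of_one_le (n + 1) n.succ_pos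

lemma apply_e_zero_apply (hT : IsPerturbedShift c β T) (m : ℕ) :
    T (e 0) m = c * e 0 m + β * e 1 m := by
  rw [hT.apply_e_zero]; rfl

lemma apply_zero (hT : IsPerturbedShift c β T) (x : H) : T x 0 = c * x 0 := by
  refine ContinuousLinearMap.apply_eq_mul_of_apply_e (fun n => ?_) x
  rcases n with _ | n
  · simp [hT.apply_e_zero_apply]
  · simp [hT.apply_e_succ]

lemma apply_one (hT : IsPerturbedShift c β T) (x : H) : T x 1 = β * x 0 := by
  refine ContinuousLinearMap.apply_eq_mul_of_apply_e (fun n => ?_) x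
  rcases n with _ | n
  · simp [hT.apply_e_zero_apply]
  · simp [hT.apply_e_succ]

lemma apply_succ (hT : IsPerturbedShift c β T) (x : H) {k : ℕ} (hk : 1 ≤ k) :
    T x (k + 1) = x k := by
  have hk0 : k ≠ 0 := Nat.one_le_iff_ne_zero.mp hk
  rw [← one_mul (x k)]
  refine ContinuousLinearMap.apply_eq_mul_of_apply_e (fun n => ?_) x
  rcases n with _ | n
  · simp [hT.apply_e_zero_apply, hk0, hk0.symm]
  · simp [hT.apply_e_succ, eq_comm]

/-- An eigenvector for `c` would satisfy `v k = c ^ n * v (k + n)` for `k ≥ 1`, which forces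
`v k = 0` when `‖c‖ < 1`; then `β * v 0 = c * v 1 = 0`. -/
lemma eq_zero_of_apply_eq_smul (hT : IsPerturbedShift c β T) (hβ : β ≠ 0) (hc : ‖c‖ < 1)
    {v : H} (hv : T v = c • v) : v = 0 := by
  have hstep : ∀ k, 1 ≤ k → v k = c * v (k + 1) := fun k hk => by
    rw [← hT.apply_succ v hk, hv]; rfl
  have hpow : ∀ k, 1 ≤ k → ∀ n, v k = c ^ n * v (k + n) := fun k hk n => by
    induction n with
    | zero => simp
    | succ n ih => rw [ih, hstep (k + n) (by omega), ← mul_assoc, ← pow_succ, add_assoc]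
  have htail : ∀ k, 1 ≤ k → v k = 0 := fun k hk => by
    have hle : ∀ n, ‖v k‖ ≤ ‖c‖ ^ n * ‖v‖ := fun n => by
      rw [hpow k hk n, norm_mul, norm_pow]
      gcongr
      simpa using lp.norm_apply_le_norm two_ne_zero v (k + n)
    have hlim : Filter.Tendsto (fun n => ‖c‖ ^ n * ‖v‖) Filter.atTop (nhds 0) := by
      simpa using (tendsto_pow_atTop_nhds_zero_of_lt_one (norm_nonneg c) hc).mul_const ‖v‖
    exact norm_le_zero_iff.mp (ge_of_tendsto' hlim hle)
  have hzero : v 0 = 0 := by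
    have : β * v 0 = c * v 1 := by rw [← hT.apply_one v, hv]; rfl
    rw [htail 1 le_rfl, mul_zero] at this
    exact (mul_eq_zero.mp this).resolve_left hβ
  ext k
  rcases k with _ | k
  · exact hzero
  · exact htail (k + 1) k.succ_pos

lemma mapsTo_inf_ker (hT : IsPerturbedShift c β T) {M : Submodule ℂ H}
    (hMinv : ∀ x ∈ M, T x ∈ M) :
    ∀ x ∈ M ⊓ (innerSL ℂ (e 0)).ker, T x ∈ M ⊓ (innerSL ℂ (e 0)).ker := by
  rintro x ⟨hxM, hx0⟩
  rw [SetLike.mem_coe, mem_ker_innerSL_e_iff] at hx0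
  refine ⟨hMinv x hxM, ?_⟩
  rw [SetLike.mem_coe, mem_ker_innerSL_e_iff, hT.apply_zero, hx0, mul_zero]

lemma inf_ker_ne_bot (hT : IsPerturbedShift c β T) (hβ : β ≠ 0) (hc : ‖c‖ < 1)
    {M : Submodule ℂ H} (hM : M ≠ ⊥) (hMinv : ∀ x ∈ M, T x ∈ M) :
    M ⊓ (innerSL ℂ (e 0)).ker ≠ ⊥ := by
  obtain ⟨v, hvM, hv⟩ := M.exists_mem_ne_zero_of_ne_bot hM
  rw [Submodule.ne_bot_iff]
  by_cases hv0 : v 0 = 0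
  · exact ⟨v, ⟨hvM, (mem_ker_innerSL_e_iff 0 v).2 hv0⟩, hv⟩
  refine ⟨T v - c • v, ⟨M.sub_mem (hMinv v hvM) (M.smul_mem c hvM), ?_⟩, ?_⟩
  · rw [SetLike.mem_coe, mem_ker_innerSL_e_iff, lp.coeFn_sub, Pi.sub_apply, hT.apply_zero]
    simp
  · exact fun h => hv (hT.eq_zero_of_apply_eq_smul hβ hc (sub_eq_zero.mp h))

end IsPerturbedShift

theorem invariant_subspace_dichotomy_general (α β : ℂ) (hβ : β ≠ 0)
    (hnorm : ‖α‖ ^ 2 + ‖β‖ ^ 2 = 1)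
    (T : H →L[ℂ] H)
    (hT0 : T (e 0) = (α * conj β) • e 0 + β • e 1)
    (hTn : ∀ n : ℕ, 1 ≤ n → T (e n) = e (n + 1))
    (M : Submodule ℂ H) (hMcl : IsClosed (M : Set H)) (hMne : M ≠ ⊥)
    (hMinv : ∀ x ∈ M, T x ∈ M)
    (M₁ : Submodule ℂ H)
    (hM₁ : ∀ x : H, x ∈ M₁ ↔ x ∈ M ∧ (inner ℂ x (e 0) : ℂ) = 0) :
    M₁ ≠ ⊥ ∧ (∀ x ∈ M₁, T x ∈ M₁) ∧
      (M = M₁ ∨ Module.finrank ℂ ↥(M ⊓ M₁ᗮ) = 1) := by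
  have hT : IsPerturbedShift (α * conj β) β T := ⟨hT0, hTn⟩
  have hc : ‖α * conj β‖ < 1 := by
    rw [norm_mul, Complex.norm_conj]
    nlinarith [sq_nonneg (‖α‖ - ‖β‖)]
  obtain rfl : M₁ = M ⊓ (innerSL ℂ (e 0)).ker := by
    ext x
    rw [hM₁, inner_eq_zero_symm]
    rfl
  refine ⟨hT.inf_ker_ne_bot hβ hc hMne hMinv, hT.mapsTo_inf_ker hMinv, ?_⟩
  by_cases hMf : M ≤ (innerSL ℂ (e 0)).ker
  · exact .inl (inf_eq_left.mpr hMf).symm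
  · exact .inr (finrank_inf_orthogonal_inf_ker_eq_one hMcl hMf)

/-- For a nonzero closed `T_{α,β}`-invariant subspace `M`, the subspace
`M₁ = {x ∈ M : ⟨x, e 0⟩ = 0}` is nonzero and invariant, and either `M = M₁` or
`M ⊖ M₁` is one-dimensional. -/
theorem invariant_subspace_dichotomy (α β : ℂ) (hα : α ≠ 0) (hβ : β ≠ 0)
    (hnorm : ‖α‖ ^ 2 + ‖β‖ ^ 2 = 1)
    (T : H →L[ℂ] H)
    (hT0 : T (e 0) = (α * conj β) • e 0 + β • e 1)
    (hTn : ∀ n : ℕ, 1 ≤ n → T (e n) = e (n + 1))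
    (M : Submodule ℂ H) (hMcl : IsClosed (M : Set H)) (hMne : M ≠ ⊥)
    (hMinv : ∀ x ∈ M, T x ∈ M)
    (M₁ : Submodule ℂ H)
    (hM₁ : ∀ x : H, x ∈ M₁ ↔ x ∈ M ∧ (inner ℂ x (e 0) : ℂ) = 0) :
    M₁ ≠ ⊥ ∧ (∀ x ∈ M₁, T x ∈ M₁) ∧
      (M = M₁ ∨ Module.finrank ℂ ↥(M ⊓ M₁ᗮ) = 1) :=
  invariant_subspace_dichotomy_general α β hβ hnorm T hT0 hTn M hMcl hMne hMinv M₁ hM₁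

end
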